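/- arXiv:2009.06569 — 6 statements merged into one kernel-verified Lean document; each statement's English description precedes it below -/
import Mathlib

section
/- Let d ≥ 2 and let M be a real d×d matrix such that for every nonzero x ∈ ℝ^d the projective orbit of x under the one-parameter group t ↦ exp(tM) is a proper subset of a projective line. Then either the flow is parabolic, i.e. there exists λ ∈ ℝ with (M − λI)² = 0, or the flow is hyperbolic, i.e. there exist real numbers α ≠ β with (M − αI)(M − βI) = 0 (so M is diagonalizable over ℝ with exactly two eigenvalues). -/
/-- The projective orbit of a nonzero vector `x` under the one-parameter group
`t ↦ exp (t M)` is a proper subset of a projective line: there is a two-dimensional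
linear subspace `V` containing the whole orbit, and some nonzero `y ∈ V` that the
orbit misses projectively (no orbit point is a scalar multiple of `y`). -/
def ProjOrbitProperSubsetOfLine (d : ℕ) (M : Matrix (Fin d) (Fin d) ℝ)
    (x : Fin d → ℝ) : Prop :=
  ∃ V : Submodule ℝ (Fin d → ℝ), Module.finrank ℝ V = 2 ∧
    (∀ t : ℝ, (NormedSpace.exp (t • M)).mulVec x ∈ V) ∧
    ∃ y ∈ V, y ≠ 0 ∧ ∀ t c : ℝ, (NormedSpace.exp (t • M)).mulVec x ≠ c • y

/-!
Differentiating the orbit shows that its plane `V` contains `x`, `M x` and `M² x`, so these are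
dependent for every `x`. Some vector has the whole minimal polynomial of `M` as its annihilator,
hence that polynomial has degree at most `2`, and completing the square gives `(M - α)² = δ`.
For `δ ≥ 0` the flow is parabolic or hyperbolic. For `δ < 0` we get `M = α + β J` with `J² = -1`,
so `ℂ` acts on `V` through `J` and `exp (t M) x = exp (t (α + β i)) • x` passes through every real
direction of `V`, contradicting the missed direction `y`.
-/

open NormedSpace Matrix Polynomial Module

theorem Polynomial.Monic.exists_eq_X_sub_C_sq_sub_C {K : Type*} [Field K] [NeZero (2 : K)]
    {p : K[X]} (hp : p.Monic) (hdeg : p.natDegree = 2) :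
    ∃ α δ : K, p = (X - C α) ^ 2 - C δ := by
  refine ⟨-p.coeff 1 * 2⁻¹, (p.coeff 1 * 2⁻¹) ^ 2 - p.coeff 0, ?_⟩
  have h2 : C (2⁻¹ : K) * 2 = 1 := by
    rw [← C_ofNat, ← C_mul, inv_mul_cancel₀ two_ne_zero, C_1]
  conv_lhs => rw [hp.as_sum, hdeg]
  simp only [Finset.sum_range_succ, Finset.sum_range_zero, map_sub, map_pow, map_mul, map_neg]
  linear_combination (-C (p.coeff 1) * X) * h2

theorem exists_sub_smul_one_sq_eq_smul_one {K A : Type*} [Field K] [NeZero (2 : K)] [Ring A]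
    [Algebra K A] {a : A} (ha : IsIntegral K a) (hdeg : (minpoly K a).natDegree ≤ 2) :
    ∃ α δ : K, (a - α • 1) ^ 2 = δ • 1 := by
  set p := minpoly K a * X ^ (2 - (minpoly K a).natDegree)
  have hp : p.Monic := (minpoly.monic ha).mul (monic_X_pow _)
  have hpdeg : p.natDegree = 2 := by
    rw [(minpoly.monic ha).natDegree_mul (monic_X_pow _), natDegree_X_pow]; omega
  obtain ⟨α, δ, hαδ⟩ := hp.exists_eq_X_sub_C_sq_sub_C hpdeg
  refine ⟨α, δ, ?_⟩
  have := congr_arg (aeval a) hαδ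
  simp only [p, map_mul, minpoly.aeval, zero_mul, map_sub, map_pow, aeval_X, aeval_C,
    Algebra.algebraMap_eq_smul_one] at this
  exact sub_eq_zero.mp this.symm

theorem sub_add_smul_one_mul_sub_sub_smul_one {R A : Type*} [CommRing R] [Ring A] [Algebra R A]
    (a : A) (α s : R) :
    (a - (α + s) • 1) * (a - (α - s) • 1) = (a - α • 1) ^ 2 - s ^ 2 • 1 := by
  simp only [sq, sub_mul, mul_sub, smul_mul_assoc, mul_smul_comm, one_mul, mul_one]
  module

namespace Module.End

variable {K V : Type*} [Field K] [AddCommGroup V] [Module K V] [FiniteDimensional K V]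

theorem exists_forall_aeval_apply_eq_zero_iff (f : Module.End K V) :
    ∃ x : V, ∀ p : K[X], aeval f p x = 0 ↔ minpoly K f ∣ p := by
  obtain ⟨x, hx⟩ := exists_ker_toSpanSingleton_eq_annihilator K[X] (AEval' f)
  obtain ⟨x, rfl⟩ := (AEval'.of f).surjective x
  refine ⟨x, fun p => ?_⟩
  rw [← Ideal.mem_span_singleton, span_minpoly_eq_annihilator, ← hx, LinearMap.mem_ker,
    LinearMap.toSpanSingleton_apply, ← Module.AEval.of_aeval_smul, LinearEquiv.map_eq_zero_iff]
  rfl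

theorem exists_linearIndependent_pow_apply (f : Module.End K V) :
    ∃ x : V, LinearIndependent K fun i : Fin (minpoly K f).natDegree => (f ^ (i : ℕ)) x := by
  obtain ⟨x, hx⟩ := exists_forall_aeval_apply_eq_zero_iff f
  refine ⟨x, Fintype.linearIndependent_iff.mpr fun g hg i => ?_⟩
  set p : K[X] := ∑ i : Fin (minpoly K f).natDegree, C (g i) * X ^ (i : ℕ)
  have hp : p = 0 := by
    refine eq_zero_of_dvd_of_degree_lt ((hx p).mp ?_) ?_
    · simpa [p, map_sum, Module.End.mul_apply] using hg
    · rw [degree_eq_natDegree (minpoly.ne_zero (Algebra.IsIntegral.isIntegral f))]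
      exact degree_sum_fin_lt g
  simpa [p, finsetSum_coeff, coeff_C_mul_X_pow, Fin.val_eq_val] using congr_arg (coeff · i) hp

theorem natDegree_minpoly_le {f : Module.End K V} {n : ℕ}
    (h : ∀ x : V, ¬ LinearIndependent K fun i : Fin (n + 1) => (f ^ (i : ℕ)) x) :
    (minpoly K f).natDegree ≤ n := by
  by_contra! hlt
  obtain ⟨x, hx⟩ := exists_linearIndependent_pow_apply f
  exact h x (hx.comp (Fin.castLE hlt) (Fin.castLE_injective hlt))

end Module.End

theorem HasDerivAt.mem_of_forall_mem {𝕜 E : Type*} [NontriviallyNormedField 𝕜]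
    [NormedAddCommGroup E] [NormedSpace 𝕜 E] {f : 𝕜 → E} {f' : E} {t : 𝕜}
    (hf : HasDerivAt f f' t) {V : Submodule 𝕜 E} (hV : IsClosed (V : Set E))
    (hmem : ∀ s, f s ∈ V) : f' ∈ V := by
  rw [← hf.deriv]
  refine closure_minimal ?_ hV (range_deriv_subset_closure_span_image f dense_univ ⟨t, rfl⟩)
  rw [Set.image_univ, SetLike.coe_subset_coe, Submodule.span_le]
  exact Set.range_subset_iff.mpr hmem

open Complex in
theorem Complex.exists_exp_mul_eq_real_smul (α : ℝ) {β : ℝ} (hβ : β ≠ 0) {w : ℂ} (hw : w ≠ 0) :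
    ∃ t c : ℝ, exp (t * (α + β * I)) = c • w := by
  have hpolar := norm_mul_exp_arg_mul_I w
  set r := ‖w‖
  set θ := arg w
  have hr : (r : ℂ) ≠ 0 := by exact_mod_cast norm_ne_zero_iff.mpr hw
  have hβ' : (β : ℂ) ≠ 0 := by exact_mod_cast hβ
  refine ⟨θ / β, Real.exp (θ / β * α) / r, ?_⟩
  rw [← hpolar, real_smul]
  push_cast
  rw [← mul_assoc, div_mul_cancel₀ _ hr, ← exp_add]
  congr 1
  field_simp

theorem exists_sq_eq_neg_one_of_sub_smul_one_sq_eq_neg {A : Type*} [Ring A] [Algebra ℝ A]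
    {a : A} {α δ : ℝ} (hδ : δ < 0) (ha : (a - α • 1) ^ 2 = δ • 1) :
    ∃ β : ℝ, β ≠ 0 ∧ ∃ J : A, J * J = -1 ∧ a = α • 1 + β • J := by
  have hβ : √(-δ) ≠ 0 := (Real.sqrt_pos.mpr (neg_pos.mpr hδ)).ne'
  refine ⟨√(-δ), hβ, (√(-δ))⁻¹ • (a - α • 1), ?_, ?_⟩
  · have hc : (√(-δ))⁻¹ * (√(-δ))⁻¹ * δ = -1 := by
      rw [← mul_inv, Real.mul_self_sqrt (neg_nonneg.mpr hδ.le), inv_neg, neg_mul,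
        inv_mul_cancel₀ hδ.ne]
    rw [smul_mul_smul_comm, ← sq (a - _), ha, smul_smul, hc, neg_smul, one_smul]
  · rw [smul_smul, mul_inv_cancel₀ hβ, one_smul, add_sub_cancel]

theorem AlgHom.mulVec_eq_zero_iff {K F n : Type*} [Field K] [Field F] [Algebra K F] [Fintype n]
    [DecidableEq n] (φ : F →ₐ[K] Matrix n n K) {x : n → K} (hx : x ≠ 0) {w : F} :
    φ w *ᵥ x = 0 ↔ w = 0 := by
  refine ⟨fun h => ?_, fun h => by rw [h, map_zero, zero_mulVec]⟩
  by_contra hw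
  apply hx
  calc x = φ (w⁻¹ * w) *ᵥ x := by rw [inv_mul_cancel₀ hw, map_one, one_mulVec]
    _ = 0 := by rw [map_mul, ← mulVec_mulVec, h, mulVec_zero]

section MatrixExp

attribute [local instance] Matrix.linftyOpNormedRing Matrix.linftyOpNormedAlgebra

theorem Matrix.hasDerivAt_exp_smul_mulVec {n : Type*} [Fintype n] [DecidableEq n]
    (M : Matrix n n ℝ) (x : n → ℝ) (t : ℝ) :
    HasDerivAt (fun s : ℝ => exp (s • M) *ᵥ x) (exp (t • M) *ᵥ (M *ᵥ x)) t := by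
  rw [mulVec_mulVec]
  exact (((mulVecBilin ℝ ℝ).flip x).toContinuousLinearMap.hasFDerivAt.comp_hasDerivAt t
    (hasDerivAt_exp_smul_const M t) :)

theorem Matrix.exp_smul_pow_mulVec_mem {n : Type*} [Fintype n] [DecidableEq n]
    {M : Matrix n n ℝ} {x : n → ℝ} {V : Submodule ℝ (n → ℝ)}
    (hV : ∀ t : ℝ, exp (t • M) *ᵥ x ∈ V) (k : ℕ) (t : ℝ) :
    exp (t • M) *ᵥ ((M ^ k) *ᵥ x) ∈ V := by
  induction k generalizing t with
  | zero => simpa using hV t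
  | succ k ih =>
    rw [pow_succ', ← mulVec_mulVec]
    exact (hasDerivAt_exp_smul_mulVec M _ t).mem_of_forall_mem
      V.closed_of_finiteDimensional ih

theorem not_projOrbitProperSubsetOfLine_of_sub_smul_one_sq_eq_neg {d : ℕ}
    {M : Matrix (Fin d) (Fin d) ℝ} {α δ : ℝ} (hδ : δ < 0) (hM : (M - α • 1) ^ 2 = δ • 1)
    {x : Fin d → ℝ} (hx : x ≠ 0) : ¬ ProjOrbitProperSubsetOfLine d M x := by
  rintro ⟨V, hrank, hmem, y, hyV, hy0, hmiss⟩
  obtain ⟨β, hβ, J, hJ, rfl⟩ := exists_sq_eq_neg_one_of_sub_smul_one_sq_eq_neg hδ hM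
  set φ := Complex.liftAux J hJ
  have hexp (t : ℝ) :
      exp (t • (α • 1 + β • J)) = φ (Complex.exp (t * (α + β * Complex.I))) := by
    rw [Complex.exp_eq_exp_ℂ, map_exp φ φ.toLinearMap.continuous_of_finiteDimensional,
      ← Complex.real_smul, map_smul]
    -- the two `exp`s carry the product and the operator-norm topology, equal only up to unfolding
    congr 2
    simp [φ, Complex.liftAux_apply, Algebra.algebraMap_eq_smul_one]
  let L : ℂ →ₗ[ℝ] (Fin d → ℝ) := (mulVecBilin ℝ ℝ).flip x ∘ₗ φ.toLinearMap
  have hL : Function.Injective L :=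
    (injective_iff_map_eq_zero L).mpr fun w => (φ.mulVec_eq_zero_iff hx).mp
  have hLV : LinearMap.range L = V := by
    refine Submodule.eq_of_le_of_finrank_eq ?_ ?_
    · have hxV : x ∈ V := by simpa using exp_smul_pow_mulVec_mem hmem 0 0
      have hMxV : (α • 1 + β • J) *ᵥ x ∈ V := by simpa using exp_smul_pow_mulVec_mem hmem 1 0
      have hJxV : J *ᵥ x ∈ V := by
        have hJx : J *ᵥ x = β⁻¹ • ((α • 1 + β • J) *ᵥ x - α • x) := by
          rw [add_mulVec, smul_mulVec, smul_mulVec, one_mulVec, add_sub_cancel_left, smul_smul,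
            inv_mul_cancel₀ hβ, one_smul]
        exact hJx ▸ V.smul_mem _ (V.sub_mem hMxV (V.smul_mem _ hxV))
      rintro _ ⟨w, rfl⟩
      simp only [L, φ, LinearMap.comp_apply, LinearMap.flip_apply, mulVecBilin_apply,
        AlgHom.toLinearMap_apply, Complex.liftAux_apply, Algebra.algebraMap_eq_smul_one,
        add_mulVec, smul_mulVec, one_mulVec]
      exact V.add_mem (V.smul_mem _ hxV) (V.smul_mem _ hJxV)
    · rw [LinearMap.finrank_range_of_inj hL, Complex.finrank_real_complex, hrank]
  obtain ⟨w, rfl⟩ : y ∈ LinearMap.range L := hLV ▸ hyV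
  have hw : w ≠ 0 := by rintro rfl; exact hy0 (map_zero L)
  obtain ⟨t, c, htc⟩ := Complex.exists_exp_mul_eq_real_smul α hβ hw
  exact hmiss t c (by rw [hexp, htc]; exact L.map_smul c w)

end MatrixExp

theorem ProjOrbitProperSubsetOfLine.not_linearIndependent {d : ℕ} {M : Matrix (Fin d) (Fin d) ℝ}
    {x : Fin d → ℝ} (h : ProjOrbitProperSubsetOfLine d M x) :
    ¬ LinearIndependent ℝ fun i : Fin 3 => (M ^ (i : ℕ)) *ᵥ x := by
  obtain ⟨V, hrank, hmem, -⟩ := h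
  intro hli
  have hle : Submodule.span ℝ (Set.range fun i : Fin 3 => (M ^ (i : ℕ)) *ᵥ x) ≤ V :=
    Submodule.span_le.mpr <| Set.range_subset_iff.mpr fun i => by
      simpa using exp_smul_pow_mulVec_mem hmem i 0
  have := Submodule.finrank_mono hle
  rw [finrank_span_eq_card hli, hrank] at this
  simp at this

theorem natDegree_minpoly_le_two {d : ℕ} {M : Matrix (Fin d) (Fin d) ℝ}
    (h : ∀ x : Fin d → ℝ, x ≠ 0 → ProjOrbitProperSubsetOfLine d M x) :
    (minpoly ℝ M).natDegree ≤ 2 := by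
  rw [← Matrix.minpoly_toLin']
  refine Module.End.natDegree_minpoly_le fun x => ?_
  rcases eq_or_ne x 0 with rfl | hx
  · exact fun hli => hli.ne_zero 0 (by simp)
  · simpa [← Matrix.toLin'_pow, Matrix.toLin'_apply] using (h x hx).not_linearIndependent

/-- Every linear flow is parabolic or hyperbolic. -/
theorem every_linear_flow_parabolic_or_hyperbolic
    (d : ℕ) (hd : 2 ≤ d) (M : Matrix (Fin d) (Fin d) ℝ)
    (h : ∀ x : Fin d → ℝ, x ≠ 0 → ProjOrbitProperSubsetOfLine d M x) :
    (∃ lam : ℝ, (M - lam • (1 : Matrix (Fin d) (Fin d) ℝ)) ^ 2 = 0) ∨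
      (∃ α β : ℝ, α ≠ β ∧
        (M - α • (1 : Matrix (Fin d) (Fin d) ℝ)) *
          (M - β • (1 : Matrix (Fin d) (Fin d) ℝ)) = 0) := by
  obtain ⟨α, δ, hM⟩ := exists_sub_smul_one_sq_eq_smul_one
    (Algebra.IsIntegral.isIntegral M) (natDegree_minpoly_le_two h)
  rcases lt_trichotomy δ 0 with hδ | rfl | hδ
  · have hx : (Pi.single (⟨0, by omega⟩ : Fin d) 1 : Fin d → ℝ) ≠ 0 := by simp
    exact absurd (h _ hx) (not_projOrbitProperSubsetOfLine_of_sub_smul_one_sq_eq_neg hδ hM hx)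
  · exact Or.inl ⟨α, by rw [hM, zero_smul]⟩
  · refine Or.inr ⟨α + √δ, α - √δ, by linarith [Real.sqrt_pos.mpr hδ], ?_⟩
    rw [sub_add_smul_one_mul_sub_sub_smul_one, hM, Real.sq_sqrt hδ.le, sub_self]
end

section
/- Let N be a nonzero real d×d matrix with N² = 0 (so that t ↦ I + tN is a nontrivial parabolic linear flow). Then there is no properly convex open cone C ⊆ ℝ^d such that (I + tN)·C = C for all t ∈ ℝ. In other words, a parabolic linear flow preserves no properly convex domain. -/
/-- A properly convex open cone in `ℝ^d`. -/
def IsProperlyConvexOpenCone (d : ℕ) (C : Set (Fin d → ℝ)) : Prop :=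
  C.Nonempty ∧ IsOpen C ∧ Convex ℝ C ∧
    (∀ x ∈ C, ∀ c : ℝ, 0 < c → c • x ∈ C) ∧
    closure C ∩ (-(closure C)) = {0}

/-! The flow direction must vanish on the cone. If `x ∈ C`, then the whole line `x + t • N x`
lies in `C`; scaling by `1/|t|` and letting `|t| → ∞` puts both `N x` and `-N x` in the closure
of `C`, so `N x = 0` by properness. Thus `N` vanishes on the nonempty open set `C`, hence `N = 0`. -/

open Filter Topology Set

section Cone

variable {E : Type*} [AddCommGroup E] [Module ℝ E] [TopologicalSpace E] [ContinuousAdd E]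
  [ContinuousSMul ℝ E] {C : Set E} {x v : E}

theorem mem_closure_of_forall_pos_add_smul_mem (hcone : ∀ y ∈ C, ∀ c : ℝ, 0 < c → c • y ∈ C)
    (h : ∀ t : ℝ, 0 < t → x + t • v ∈ C) : v ∈ closure C := by
  have hlim : Tendsto (fun c : ℝ => c • x + v) (𝓝[>] 0) (𝓝 v) := by
    simpa using
      ((tendsto_nhdsWithin_of_tendsto_nhds (tendsto_id (x := 𝓝 (0 : ℝ)))).smul_const x).add_const v
  refine mem_closure_of_tendsto hlim (eventually_nhdsWithin_of_forall fun c (hc : 0 < c) => ?_)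
  -- `c • x + v = c • (x + c⁻¹ • v)`
  simpa [smul_add, smul_smul, hc.ne'] using hcone _ (h c⁻¹ (inv_pos.2 hc)) c hc

theorem eq_zero_of_forall_add_smul_mem (hcone : ∀ y ∈ C, ∀ c : ℝ, 0 < c → c • y ∈ C)
    (hproper : closure C ∩ -closure C = {0}) (h : ∀ t : ℝ, x + t • v ∈ C) : v = 0 := by
  have hv : v ∈ closure C := mem_closure_of_forall_pos_add_smul_mem hcone fun t _ => h t
  have hnegv : -v ∈ closure C :=
    mem_closure_of_forall_pos_add_smul_mem hcone fun t _ => by simpa using h (-t)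
  simpa using hproper.subset ⟨hv, Set.mem_neg.2 hnegv⟩

end Cone

theorem LinearMap.eq_zero_of_isOpen_subset_ker {E F : Type*} [AddCommGroup E] [Module ℝ E]
    [TopologicalSpace E] [ContinuousAdd E] [ContinuousSMul ℝ E] [AddCommGroup F] [Module ℝ F]
    (f : E →ₗ[ℝ] F) {U : Set E} (hU : IsOpen U) (hne : U.Nonempty) (hUf : U ⊆ LinearMap.ker f) :
    f = 0 :=
  LinearMap.ker_eq_top.1 <| (LinearMap.ker f).eq_top_of_nonempty_interior' <|
    hne.mono (interior_maximal hUf hU)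

theorem parabolic_flow_preserves_no_properly_convex_cone_general
    (d : ℕ) (N : Matrix (Fin d) (Fin d) ℝ) (hN : N ≠ 0) :
    ¬ ∃ C : Set (Fin d → ℝ), IsProperlyConvexOpenCone d C ∧
        ∀ t : ℝ, Matrix.mulVec ((1 : Matrix (Fin d) (Fin d) ℝ) + t • N) '' C = C := by
  rintro ⟨C, ⟨⟨x₀, hx₀⟩, hopen, -, hcone, hproper⟩, hinv⟩
  have hker : C ⊆ LinearMap.ker N.mulVecLin := fun x hx => by
    refine eq_zero_of_forall_add_smul_mem hcone hproper (x := x) fun t => ?_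
    have hflow : Matrix.mulVec (1 + t • N) x ∈ C := hinv t ▸ mem_image_of_mem _ hx
    simpa [Matrix.add_mulVec, Matrix.smul_mulVec] using hflow
  exact hN <| Matrix.toLin'.map_eq_zero_iff.1 <|
    N.mulVecLin.eq_zero_of_isOpen_subset_ker hopen ⟨x₀, hx₀⟩ hker

/-- A nontrivial parabolic linear flow `t ↦ I + tN` (with `N ≠ 0`, `N² = 0`)
preserves no properly convex open cone. -/
theorem parabolic_flow_preserves_no_properly_convex_cone
    (d : ℕ) (N : Matrix (Fin d) (Fin d) ℝ) (hN : N ≠ 0) (hN2 : N ^ 2 = 0) :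
    ¬ ∃ C : Set (Fin d → ℝ), IsProperlyConvexOpenCone d C ∧
        ∀ t : ℝ, Matrix.mulVec ((1 : Matrix (Fin d) (Fin d) ℝ) + t • N) '' C = C :=
  parabolic_flow_preserves_no_properly_convex_cone_general d N hN
end

section
/- Let ℝ^d = A ⊕ B be a direct sum decomposition into nonzero linear subspaces, with projections π_A onto A and π_B onto B, and let Φ_t = π_A + e^t·π_B ∈ GL(d,ℝ) be the associated hyperbolic linear flow. If C ⊆ ℝ^d is a properly convex open cone with Φ_t·C = C for all t ∈ ℝ, then for every p ∈ C one has π_A(p) ∈ cl(C) and π_B(p) ∈ cl(C). In particular every p ∈ C is the sum of an element of A ∩ cl(C) and an element of B ∩ cl(C), so C is reducible. -/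
/-!
Along the orbit of `p`, the flow traces the ray `s ↦ π_A p + s • π_B p` (`s = eᵗ > 0`) inside `C`.
Letting `s → 0⁺` gives `π_A p ∈ cl C`. Rescaling by `s⁻¹`, which preserves the cone, puts
`π_B p + s⁻¹ • π_A p` in `C` as well, and letting `s → ∞` gives `π_B p ∈ cl C`.
-/

open Filter Topology

section PositiveRay

variable {E : Type*} [AddCommGroup E] [Module ℝ E] {C : Set E} {a b : E}

theorem mem_closure_of_forall_pos_add_smul_mem_s4 [TopologicalSpace E] [ContinuousAdd E]
    [ContinuousSMul ℝ E] (h : ∀ s : ℝ, 0 < s → a + s • b ∈ C) : a ∈ closure C := by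
  have hlim : Tendsto (fun s : ℝ => a + s • b) (𝓝[>] 0) (𝓝 a) := by
    have hcont : Continuous fun s : ℝ => a + s • b := by fun_prop
    simpa using (hcont.tendsto 0).mono_left nhdsWithin_le_nhds
  exact mem_closure_of_tendsto hlim (eventually_nhdsWithin_of_forall h)

theorem forall_pos_add_smul_mem_swap (hcone : ∀ x ∈ C, ∀ c : ℝ, 0 < c → c • x ∈ C)
    (h : ∀ s : ℝ, 0 < s → a + s • b ∈ C) : ∀ s : ℝ, 0 < s → b + s • a ∈ C := by
  intro s hs
  have hrescaled : s • (a + s⁻¹ • b) = b + s • a := by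
    rw [smul_add, smul_smul, mul_inv_cancel₀ hs.ne', one_smul, add_comm]
  exact hrescaled ▸ hcone _ (h _ (inv_pos.mpr hs)) s hs

end PositiveRay

theorem hyperbolic_flow_invariant_cone_is_reducible_general
    (d : ℕ) (A B : Submodule ℝ (Fin d → ℝ))
    (pA pB : (Fin d → ℝ) →ₗ[ℝ] (Fin d → ℝ))
    (hpA : ∀ x, pA x ∈ A) (hpB : ∀ x, pB x ∈ B)
    (hsum : ∀ x, pA x + pB x = x)
    (C : Set (Fin d → ℝ)) (hC : IsProperlyConvexOpenCone d C)
    (hflow : ∀ t : ℝ, (fun x => pA x + Real.exp t • pB x) '' C = C) :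
    ∀ p ∈ C, (pA p ∈ closure C ∧ pB p ∈ closure C) ∧
      ∃ a ∈ (A : Set (Fin d → ℝ)) ∩ closure C,
        ∃ b ∈ (B : Set (Fin d → ℝ)) ∩ closure C, p = a + b := by
  intro p hp
  have hray : ∀ s : ℝ, 0 < s → pA p + s • pB p ∈ C := by
    intro s hs
    rw [← Real.exp_log hs, ← hflow (Real.log s)]
    exact ⟨p, hp, rfl⟩
  have hApcl : pA p ∈ closure C := mem_closure_of_forall_pos_add_smul_mem_s4 hray
  have hBpcl : pB p ∈ closure C :=
    mem_closure_of_forall_pos_add_smul_mem_s4 (forall_pos_add_smul_mem_swap hC.2.2.2.1 hray)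
  exact ⟨⟨hApcl, hBpcl⟩, pA p, ⟨hpA p, hApcl⟩, pB p, ⟨hpB p, hBpcl⟩, (hsum p).symm⟩

/-- If a properly convex open cone is preserved by the hyperbolic linear flow
`Φ_t = π_A + eᵗ·π_B` associated to a direct sum decomposition `ℝ^d = A ⊕ B`,
then for every `p ∈ C` the projections `π_A p` and `π_B p` lie in `cl C`;
in particular every `p ∈ C` is the sum of an element of `A ∩ cl C` and an
element of `B ∩ cl C`, so `C` is reducible. -/
theorem hyperbolic_flow_invariant_cone_is_reducible
    (d : ℕ) (A B : Submodule ℝ (Fin d → ℝ)) (hA : A ≠ ⊥) (hB : B ≠ ⊥)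
    (hcompl : IsCompl A B)
    (pA pB : (Fin d → ℝ) →ₗ[ℝ] (Fin d → ℝ))
    (hpA : ∀ x, pA x ∈ A) (hpB : ∀ x, pB x ∈ B)
    (hsum : ∀ x, pA x + pB x = x)
    (C : Set (Fin d → ℝ)) (hC : IsProperlyConvexOpenCone d C)
    (hflow : ∀ t : ℝ, (fun x => pA x + Real.exp t • pB x) '' C = C) :
    ∀ p ∈ C, (pA p ∈ closure C ∧ pB p ∈ closure C) ∧
      ∃ a ∈ (A : Set (Fin d → ℝ)) ∩ closure C,
        ∃ b ∈ (B : Set (Fin d → ℝ)) ∩ closure C, p = a + b :=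
  hyperbolic_flow_invariant_cone_is_reducible_general d A B pA pB hpA hpB hsum C hC hflow
end

section
/- Let C ⊆ ℝ^{n+1} be a properly convex open cone and let T ≤ GL(n+1,ℝ) be an abelian subgroup that is connected (as a subset of GL(n+1,ℝ)) and preserves C, such that the induced action of T on the rays of C is simply transitive: for all x, y ∈ C there exist g ∈ T and c > 0 with g·x = c·y, and every g ∈ T that satisfies g·x = c·x for some x ∈ C and some c > 0 is a scalar multiple of the identity. Then C is a simplicial cone: there is a basis v₀, …, vₙ of ℝ^{n+1} such that C = { t₀v₀ + ⋯ + tₙvₙ : t₀ > 0, …, tₙ > 0 }. Equivalently, the projective domain ℙ(C) is the interior of an n-simplex. -/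
/-!
Fix `x₀ ∈ C` and let `A` be the algebra of matrices generated by `T`. As `T` is abelian and
transitive on rays, `a ↦ a x₀` is a linear isomorphism from `A` onto `ℝ^{n+1}`, under which `C`
becomes the group `P = ℝ_{>0} • T`. So the commutative algebra `A` carries an open convex salient
cone `P` which is a group of units. Salience excludes nilpotents, and convexity excludes a residue
field `ℂ` (a small rotation in `P` has `-1` as a power, and `0` is the midpoint of `-1` and `1`),
so `A ≅ ℝ^{n+1}` as algebras. Every character is positive on `P` by convexity; conversely the
positive orthant is connected, so it lies in the open subgroup `P`. Thus `P` is the orthant.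
-/

open Set Filter Topology Matrix
open scoped IsMulCommutative

theorem mem_closure_of_forall_add_natCast_smul_mem {E : Type*} [AddCommGroup E] [Module ℝ E]
    [TopologicalSpace E] [ContinuousAdd E] [ContinuousSMul ℝ E] {K : Set E}
    (hK : ∀ x ∈ K, ∀ c : ℝ, 0 < c → c • x ∈ K) {a b : E}
    (h : ∀ k : ℕ, a + (k : ℝ) • b ∈ K) : b ∈ closure K := by
  have hlim : Tendsto (fun k : ℕ => (k : ℝ)⁻¹ • a + b) atTop (𝓝 b) := by
    simpa using ((tendsto_inv_atTop_zero.comp (tendsto_natCast_atTop_atTop (R := ℝ))).smul_const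
      a).add_const b
  refine mem_closure_of_tendsto hlim ?_
  filter_upwards [eventually_gt_atTop 0] with k hk
  have hk' : (0 : ℝ) < k := Nat.cast_pos.mpr hk
  simpa [smul_add, smul_smul, hk'.ne'] using hK _ (h k) _ (inv_pos.mpr hk')

theorem one_add_pow_of_mul_self_eq_zero {R : Type*} [Ring R] {x : R} (hx : x * x = 0) (k : ℕ) :
    (1 + x) ^ k = 1 + k • x := by
  induction k with
  | zero => simp
  | succ k ih =>
    rw [pow_succ, ih, add_mul, one_mul, mul_add, mul_one, smul_mul_assoc, hx, smul_zero, add_zero,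
      succ_nsmul]
    abel

theorem LinearMap.range_eq_top_of_isOpen_subset {M V : Type*} [AddCommGroup M] [Module ℝ M]
    [NormedAddCommGroup V] [NormedSpace ℝ V] (f : M →ₗ[ℝ] V) {s : Set V} (hs : IsOpen s)
    (hne : s.Nonempty) (hsub : s ⊆ range f) : range f = ⊤ :=
  (range f).eq_top_of_nonempty_interior' (hne.mono (hs.interior_eq ▸ interior_mono hsub))

theorem ContinuousLinearEquiv.eq_zero_of_mem_closure_preimage {R M V : Type*} [Ring R]
    [TopologicalSpace M] [AddCommGroup M] [Module R M] [TopologicalSpace V] [AddCommGroup V]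
    [Module R V] (E : M ≃L[R] V) {C : Set V} (hC : closure C ∩ -closure C = {0}) {x : M}
    (hx : x ∈ closure (E ⁻¹' C)) (hx' : -x ∈ closure (E ⁻¹' C)) : x = 0 := by
  rw [← E.preimage_closure] at hx hx'
  have : E x ∈ closure C ∩ -closure C := ⟨hx, by simpa using hx'⟩
  rw [hC] at this
  exact E.map_eq_zero_iff.mp this

theorem LinearEquiv.image_setOf_pos_eq {ι V : Type*} [Fintype ι] [AddCommGroup V] [Module ℝ V]
    (F : (ι → ℝ) ≃ₗ[ℝ] V) :
    F '' {t | ∀ i, 0 < t i} =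
      {x | ∃ t : ι → ℝ, (∀ i, 0 < t i) ∧ x = ∑ i, t i • (Pi.basisFun ℝ ι).map F i} := by
  have hsum (t : ι → ℝ) : ∑ i, t i • (Pi.basisFun ℝ ι).map F i = F t := by
    simpa [map_sum, map_smul] using congrArg F ((Pi.basisFun ℝ ι).sum_repr t)
  ext x
  simp only [mem_image, mem_ofPred_eq, hsum, eq_comm]

section

variable {B : Type*} [CommRing B] [Algebra ℝ B] [TopologicalSpace B] [ContinuousAdd B]
  [ContinuousSMul ℝ B] {P : Submonoid B}

theorem isReduced_of_closure_salient (hopen : IsOpen (P : Set B))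
    (hcone : ∀ x ∈ P, ∀ c : ℝ, 0 < c → c • x ∈ P)
    (hsalient : ∀ x ∈ closure (P : Set B), -x ∈ closure (P : Set B) → x = 0) :
    IsReduced B := by
  refine (isReduced_iff_pow_one_lt 2 one_lt_two).mpr fun N hN => ?_
  rw [sq] at hN
  have hline : ∀ᶠ s in 𝓝 (0 : ℝ), 1 + s • N ∈ P :=
    (continuous_const.add (continuous_id.smul continuous_const)).continuousAt.preimage_mem_nhds
      (hopen.mem_nhds (by simp))
  -- `1 + s • N` is a unipotent element of `P`, so `s • N` is a recession direction of `P`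
  have hrecession : ∀ s : ℝ, 1 + s • N ∈ P → s • N ∈ closure (P : Set B) := by
    intro s hs
    refine mem_closure_of_forall_add_natCast_smul_mem (a := 1) hcone fun k => ?_
    have hsq : s • N * s • N = 0 := by rw [smul_mul_smul_comm, hN, smul_zero]
    simpa [one_add_pow_of_mul_self_eq_zero hsq, Nat.cast_smul_eq_nsmul] using P.pow_mem hs k
  obtain ⟨ε, hε, hball⟩ := Metric.eventually_nhds_iff.mp hline
  have hε2 : |ε| / 2 < ε := by rw [abs_of_pos hε]; exact half_lt_self hε
  have hpos := hrecession (ε / 2) (hball (by simpa using hε2))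
  have hneg := hrecession (-(ε / 2)) (hball (by simpa using hε2))
  rw [neg_smul] at hneg
  simpa [hε.ne'] using hsalient _ hpos hneg

end

section

variable {B : Type*} [CommRing B] [Algebra ℝ B] {P : Submonoid B}

theorem AlgHom.pos_of_mem (hconv : Convex ℝ (P : Set B)) (hunit : ∀ x ∈ P, IsUnit x)
    (χ : B →ₐ[ℝ] ℝ) {x : B} (hx : x ∈ P) : 0 < χ x := by
  have hne (y : B) (hy : y ∈ P) : χ y ≠ 0 := ((hunit y hy).map χ).ne_zero
  refine (hne x hx).lt_or_gt.resolve_left fun hneg => ?_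
  -- the segment from `1` to `x` meets the kernel of `χ`
  have hden : χ x - 1 ≠ 0 := by linarith
  set s := χ x / (χ x - 1)
  have hs0 : 0 < s := div_pos_of_neg_of_neg hneg (by linarith)
  have hs1 : s < 1 := (div_lt_one_of_neg (by linarith)).mpr (by linarith)
  refine hne _ (hconv P.one_mem hx hs0.le (sub_nonneg.mpr hs1.le) (add_sub_cancel s 1)) ?_
  simp only [map_add, map_smul, map_one, smul_eq_mul, s]
  field_simp
  ring

variable [TopologicalSpace B] [ContinuousAdd B] [ContinuousSMul ℝ B]

theorem AlgHom.not_surjective_complex (hopen : IsOpen (P : Set B)) (hconv : Convex ℝ (P : Set B))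
    (hunit : ∀ x ∈ P, IsUnit x) (φ : B →ₐ[ℝ] ℂ) : ¬ Function.Surjective φ := by
  intro hφ
  obtain ⟨c, hc⟩ := hφ Complex.I
  set p : ℝ → B := fun θ => Real.cos θ • 1 + Real.sin θ • c
  have hφp (θ : ℝ) : φ (p θ) = Complex.cos θ + Complex.sin θ * Complex.I := by
    simp [p, hc, Algebra.smul_def]
  have hp : ∀ᶠ θ in 𝓝 (0 : ℝ), p θ ∈ P :=
    ((Real.continuous_cos.smul continuous_const).add
      (Real.continuous_sin.smul continuous_const)).continuousAt.preimage_mem_nhds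
      (hopen.mem_nhds (by simp))
  obtain ⟨m, hm, hθ⟩ := ((eventually_gt_atTop 0).and
    ((tendsto_const_div_atTop_nhds_zero_nat Real.pi).eventually hp)).exists
  -- `p (π / m)` is a rotation by `π / m`, so its `m`-th power maps to `-1`
  have hφpow : φ (p (Real.pi / m) ^ m) = -1 := by
    rw [map_pow, hφp, Complex.cos_add_sin_mul_I_pow]
    have hm' : (m : ℂ) ≠ 0 := Nat.cast_ne_zero.mpr hm.ne'
    push_cast
    rw [mul_div_cancel₀ _ hm', Complex.cos_pi, Complex.sin_pi]
    ring
  have hmid : (1 / 2 : ℝ) • p (Real.pi / m) ^ m + (1 / 2 : ℝ) • 1 ∈ P :=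
    hconv (P.pow_mem hθ m) P.one_mem (by norm_num) (by norm_num) (by norm_num)
  have hzero : φ ((1 / 2 : ℝ) • p (Real.pi / m) ^ m + (1 / 2 : ℝ) • 1) = 0 := by
    rw [map_add, map_smul, map_smul, hφpow, map_one, smul_neg, neg_add_cancel]
  exact not_isUnit_zero (hzero ▸ (hunit _ hmid).map φ)

end

theorem setOf_pos_subset_of_isOpen {ι : Type*} (Q : Submonoid (ι → ℝ))
    (hopen : IsOpen (Q : Set (ι → ℝ))) (hinv : ∀ x ∈ Q, ∃ y ∈ Q, x * y = 1) :
    {x : ι → ℝ | ∀ i, 0 < x i} ⊆ Q := by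
  set O := {x : ι → ℝ | ∀ i, 0 < x i}
  intro a ha
  by_contra haQ
  have hmul_inv (b : ι → ℝ) (hb : b ∈ O) : b * b⁻¹ = 1 := by
    funext i
    simp [(hb i).ne']
  -- `O` would be disconnected by `Q` and the union of the cosets `b • Q` with `b ∈ O \ Q`
  set U := ⋃ b ∈ O \ Q, (b⁻¹ * ·) ⁻¹' (Q : Set (ι → ℝ))
  have hUopen : IsOpen U :=
    isOpen_biUnion fun b _ => hopen.preimage (continuous_const.mul continuous_id)
  have hdisj : ∀ x ∈ U, x ∉ Q := by
    intro x hx hxQ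
    obtain ⟨b, ⟨hbO, hbQ⟩, hbx⟩ := mem_iUnion₂.mp hx
    obtain ⟨w, hwQ, hw⟩ := hinv _ hbx
    have hb : b = x * w := by
      calc b = b * (b⁻¹ * x * w) := by rw [hw, mul_one]
        _ = x * w := by rw [← mul_assoc, ← mul_assoc, hmul_inv b hbO, one_mul]
    exact hbQ (hb ▸ Q.mul_mem hxQ hwQ)
  have hcover : O ⊆ Q ∪ U := by
    intro x hx
    by_cases hxQ : x ∈ Q
    · exact Or.inl hxQ
    · refine Or.inr (mem_iUnion₂.mpr ⟨x, ⟨hx, hxQ⟩, ?_⟩)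
      simp [mul_comm x⁻¹, hmul_inv x hx, Q.one_mem]
  have hOconv : Convex ℝ O := by
    intro x hx y hy s t hs ht hst i
    rcases hs.eq_or_lt with rfl | hs
    · simpa [(zero_add t).symm.trans hst] using hy i
    · simpa using add_pos_of_pos_of_nonneg (mul_pos hs (hx i)) (mul_nonneg ht (hy i).le)
  obtain ⟨x, -, hxQ, hxU⟩ := hOconv.isPreconnected _ _ hopen hUopen hcover
    ⟨1, fun _ => one_pos, Q.one_mem⟩ ⟨a, ha, hcover ha |>.resolve_left haQ⟩
  exact hdisj x hxU hxQ

theorem exists_algEquiv_pi_of_isReduced {B : Type*} [CommRing B] [Algebra ℝ B]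
    [FiniteDimensional ℝ B] [IsReduced B] (hℂ : ∀ φ : B →ₐ[ℝ] ℂ, ¬ Function.Surjective φ) :
    ∃ k, Nonempty (B ≃ₐ[ℝ] (Fin k → ℝ)) := by
  have : IsArtinianRing B := IsArtinianRing.of_finite ℝ B
  have residue (I : MaximalSpectrum B) : Nonempty ((B ⧸ I.asIdeal) ≃ₐ[ℝ] ℝ) := by
    have := I.isMaximal
    let _ := Ideal.Quotient.field I.asIdeal
    refine (Real.nonempty_algEquiv_or (B ⧸ I.asIdeal)).resolve_right ?_
    rintro ⟨ψ⟩
    exact hℂ ((ψ : (B ⧸ I.asIdeal) →ₐ[ℝ] ℂ).comp (Ideal.Quotient.mkₐ ℝ I.asIdeal))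
      (ψ.surjective.comp (Ideal.Quotient.mkₐ_surjective ℝ I.asIdeal))
  exact ⟨_, ⟨((IsArtinianRing.equivPi B).restrictScalars ℝ).trans <|
    (AlgEquiv.piCongrRight fun I => (residue I).some).trans <|
      AlgEquiv.piCongrLeft' ℝ (fun _ => ℝ) (Finite.equivFin _)⟩⟩

theorem exists_algEquiv_pi_preimage_pos {B : Type*} [CommRing B] [Algebra ℝ B]
    [FiniteDimensional ℝ B] [TopologicalSpace B] [IsTopologicalAddGroup B] [ContinuousSMul ℝ B]
    (P : Submonoid B) (hopen : IsOpen (P : Set B)) (hconv : Convex ℝ (P : Set B))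
    (hcone : ∀ x ∈ P, ∀ c : ℝ, 0 < c → c • x ∈ P)
    (hsalient : ∀ x ∈ closure (P : Set B), -x ∈ closure (P : Set B) → x = 0)
    (hinv : ∀ x ∈ P, ∃ y ∈ P, x * y = 1) :
    ∃ k, ∃ Φ : B ≃ₐ[ℝ] (Fin k → ℝ), (P : Set B) = Φ ⁻¹' {x | ∀ i, 0 < x i} := by
  have hunit (x : B) (hx : x ∈ P) : IsUnit x :=
    let ⟨y, _, hxy⟩ := hinv x hx
    .of_mul_eq_one y hxy
  have := isReduced_of_closure_salient hopen hcone hsalient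
  obtain ⟨k, ⟨Φ⟩⟩ :=
    exists_algEquiv_pi_of_isReduced (AlgHom.not_surjective_complex hopen hconv hunit)
  refine ⟨k, Φ, Subset.antisymm
    (fun x hx i => ((Pi.evalAlgHom ℝ _ i).comp Φ.toAlgHom).pos_of_mem hconv hunit hx) ?_⟩
  have hQ : (P.map Φ : Set (Fin k → ℝ)) = Φ.symm ⁻¹' P := by
    rw [Submonoid.coe_map]
    exact Φ.toEquiv.image_eq_preimage_symm _
  have hQopen : IsOpen (P.map Φ : Set (Fin k → ℝ)) :=
    hQ ▸ hopen.preimage Φ.symm.toLinearMap.continuous_of_finiteDimensional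
  have hQinv : ∀ x ∈ P.map Φ, ∃ y ∈ P.map Φ, x * y = 1 := by
    rintro _ ⟨x, hx, rfl⟩
    obtain ⟨y, hy, hxy⟩ := hinv x hx
    exact ⟨Φ y, ⟨y, hy, rfl⟩, by rw [← map_mul, hxy, map_one]⟩
  intro x hx
  simpa [hQ] using setOf_pos_subset_of_isOpen _ hQopen hQinv hx

section

variable {m : Type*} [Fintype m] [DecidableEq m]

noncomputable def orbitMap (A : Subalgebra ℝ (Matrix m m ℝ)) (x₀ : m → ℝ) : A →ₗ[ℝ] m → ℝ where
  toFun a := (a : Matrix m m ℝ) *ᵥ x₀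
  map_add' _ _ := add_mulVec _ _ _
  map_smul' c a := smul_mulVec c (a : Matrix m m ℝ) x₀

@[simp]
theorem orbitMap_apply (A : Subalgebra ℝ (Matrix m m ℝ)) (x₀ : m → ℝ) (a : A) :
    orbitMap A x₀ a = (a : Matrix m m ℝ) *ᵥ x₀ :=
  rfl

theorem orbitMap_injective {A : Subalgebra ℝ (Matrix m m ℝ)} [IsMulCommutative A] {x₀ : m → ℝ}
    (hrange : LinearMap.range (orbitMap A x₀) = ⊤) : Function.Injective (orbitMap A x₀) := by
  refine (injective_iff_map_eq_zero _).mpr fun a ha => Subtype.ext ?_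
  -- `a` kills the cyclic vector `x₀`, hence every `b x₀`, hence everything
  have hkill (y : m → ℝ) : (a : Matrix m m ℝ) *ᵥ y = 0 := by
    obtain ⟨b, rfl⟩ := LinearMap.range_eq_top.mp hrange y
    have hcomm : (a : Matrix m m ℝ) * b = b * a := congrArg Subtype.val (mul_comm a b)
    rw [orbitMap_apply] at ha ⊢
    rw [mulVec_mulVec, hcomm, ← mulVec_mulVec, ha, mulVec_zero]
  exact ext_of_mulVec_single fun i => by rw [hkill, ZeroMemClass.coe_zero, zero_mulVec]

def envelopingAlgebra (T : Subgroup (GL m ℝ)) : Subalgebra ℝ (Matrix m m ℝ) :=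
  Algebra.adjoin ℝ (Units.val '' (T : Set (GL m ℝ)))

variable {T : Subgroup (GL m ℝ)}

instance : IsTopologicalAddGroup (envelopingAlgebra T) :=
  inferInstanceAs (IsTopologicalAddGroup (envelopingAlgebra T).toSubring)

theorem val_mem_envelopingAlgebra {g : GL m ℝ} (hg : g ∈ T) :
    (g : Matrix m m ℝ) ∈ envelopingAlgebra T :=
  Algebra.subset_adjoin ⟨g, hg, rfl⟩

theorem isMulCommutative_envelopingAlgebra (habel : ∀ g ∈ T, ∀ h ∈ T, g * h = h * g) :
    IsMulCommutative (envelopingAlgebra T) :=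
  Algebra.isMulCommutative_adjoin ℝ <| by
    rintro _ ⟨g, hg, rfl⟩ _ ⟨h, hh, rfl⟩
    exact congrArg Units.val (habel g hg h hh)

variable (T) in
def positiveMultiples : Submonoid (envelopingAlgebra T) where
  carrier := {a | ∃ g ∈ T, ∃ c : ℝ, 0 < c ∧ (a : Matrix m m ℝ) = c • (g : Matrix m m ℝ)}
  one_mem' := ⟨1, T.one_mem, 1, one_pos, by simp⟩
  mul_mem' := by
    rintro a b ⟨g, hg, c, hc, ha⟩ ⟨h, hh, d, hd, hb⟩
    exact ⟨g * h, T.mul_mem hg hh, c * d, mul_pos hc hd, by simp [ha, hb, smul_smul, mul_comm d c]⟩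

theorem smul_mem_positiveMultiples {a : envelopingAlgebra T} (ha : a ∈ positiveMultiples T)
    {c : ℝ} (hc : 0 < c) : c • a ∈ positiveMultiples T := by
  obtain ⟨g, hg, d, hd, ha⟩ := ha
  exact ⟨g, hg, c * d, mul_pos hc hd, by simp [ha, smul_smul]⟩

theorem exists_mul_eq_one_of_mem_positiveMultiples {a : envelopingAlgebra T}
    (ha : a ∈ positiveMultiples T) : ∃ b ∈ positiveMultiples T, a * b = 1 := by
  obtain ⟨g, hg, c, hc, ha⟩ := ha
  refine ⟨c⁻¹ • ⟨_, val_mem_envelopingAlgebra (T.inv_mem hg)⟩,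
    ⟨g⁻¹, T.inv_mem hg, c⁻¹, inv_pos.mpr hc, rfl⟩, Subtype.ext ?_⟩
  simp [ha, hc.ne']

variable {C : Set (m → ℝ)} {x₀ : m → ℝ}

theorem orbitMap_mem_of_mem_positiveMultiples
    (hpres : ∀ g ∈ T, (g : Matrix m m ℝ).mulVec '' C = C)
    (hcone : ∀ x ∈ C, ∀ c : ℝ, 0 < c → c • x ∈ C) (hx₀ : x₀ ∈ C)
    {a : envelopingAlgebra T} (ha : a ∈ positiveMultiples T) :
    orbitMap (envelopingAlgebra T) x₀ a ∈ C := by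
  obtain ⟨g, hg, c, hc, ha⟩ := ha
  rw [orbitMap_apply, ha, smul_mulVec]
  exact hcone _ (hpres g hg ▸ mem_image_of_mem _ hx₀) c hc

theorem exists_mem_positiveMultiples_orbitMap_eq
    (htrans : ∀ y ∈ C, ∃ g ∈ T, ∃ c : ℝ, 0 < c ∧ (g : Matrix m m ℝ) *ᵥ x₀ = c • y)
    {y : m → ℝ} (hy : y ∈ C) :
    ∃ a ∈ positiveMultiples T, orbitMap (envelopingAlgebra T) x₀ a = y := by
  obtain ⟨g, hg, c, hc, hgy⟩ := htrans y hy
  refine ⟨c⁻¹ • ⟨_, val_mem_envelopingAlgebra hg⟩,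
    ⟨g, hg, c⁻¹, inv_pos.mpr hc, rfl⟩, ?_⟩
  simp [smul_mulVec, hgy, smul_smul, hc.ne']

theorem coe_positiveMultiples_eq_preimage
    (hpres : ∀ g ∈ T, (g : Matrix m m ℝ).mulVec '' C = C)
    (hcone : ∀ x ∈ C, ∀ c : ℝ, 0 < c → c • x ∈ C) (hx₀ : x₀ ∈ C)
    (htrans : ∀ y ∈ C, ∃ g ∈ T, ∃ c : ℝ, 0 < c ∧ (g : Matrix m m ℝ) *ᵥ x₀ = c • y)
    (hinj : Function.Injective (orbitMap (envelopingAlgebra T) x₀)) :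
    (positiveMultiples T : Set (envelopingAlgebra T)) =
      orbitMap (envelopingAlgebra T) x₀ ⁻¹' C := by
  refine Subset.antisymm (fun a ha => orbitMap_mem_of_mem_positiveMultiples hpres hcone hx₀ ha)
    fun a ha => ?_
  obtain ⟨b, hb, hba⟩ := exists_mem_positiveMultiples_orbitMap_eq htrans ha
  exact hinj hba ▸ hb

end

theorem simplicial_of_simply_transitive_abelian_general (n : ℕ)
    (C : Set (Fin (n + 1) → ℝ)) (hC : IsProperlyConvexOpenCone (n + 1) C)
    (T : Subgroup (Matrix.GeneralLinearGroup (Fin (n + 1)) ℝ))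
    (habel : ∀ g ∈ T, ∀ h ∈ T, g * h = h * g)
    (hpres : ∀ g ∈ T, Matrix.mulVec ((g : Matrix.GeneralLinearGroup (Fin (n + 1)) ℝ) :
      Matrix (Fin (n + 1)) (Fin (n + 1)) ℝ) '' C = C)
    (htrans : ∀ x ∈ C, ∀ y ∈ C, ∃ g ∈ T, ∃ c : ℝ, 0 < c ∧
      Matrix.mulVec ((g : Matrix.GeneralLinearGroup (Fin (n + 1)) ℝ) :
        Matrix (Fin (n + 1)) (Fin (n + 1)) ℝ) x = c • y) :
    ∃ v : Module.Basis (Fin (n + 1)) ℝ (Fin (n + 1) → ℝ),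
      C = {x | ∃ t : Fin (n + 1) → ℝ, (∀ i, 0 < t i) ∧ x = ∑ i, t i • v i} := by
  obtain ⟨⟨x₀, hx₀⟩, hopen, hconv, hcone, hsalient⟩ := hC
  have := isMulCommutative_envelopingAlgebra habel
  set ev := orbitMap (envelopingAlgebra T) x₀
  have hrange : LinearMap.range ev = ⊤ :=
    ev.range_eq_top_of_isOpen_subset hopen ⟨x₀, hx₀⟩ fun y hy =>
      let ⟨a, _, ha⟩ := exists_mem_positiveMultiples_orbitMap_eq (htrans x₀ hx₀) hy
      ⟨a, ha⟩
  have hinj := orbitMap_injective hrange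
  let E :=
    (LinearEquiv.ofBijective ev ⟨hinj, LinearMap.range_eq_top.mp hrange⟩).toContinuousLinearEquiv
  have hP : (positiveMultiples T : Set _) = E ⁻¹' C :=
    coe_positiveMultiples_eq_preimage hpres hcone hx₀ (htrans x₀ hx₀) hinj
  obtain ⟨k, Φ, hΦ⟩ := exists_algEquiv_pi_preimage_pos (positiveMultiples T)
    (hP ▸ hopen.preimage E.continuous) (hP ▸ hconv.linear_preimage ev)
    (fun _ ha _ hc => smul_mem_positiveMultiples ha hc)
    (hP ▸ fun _ hx hx' => E.eq_zero_of_mem_closure_preimage hsalient hx hx')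
    (fun _ ha => exists_mul_eq_one_of_mem_positiveMultiples ha)
  let F := Φ.symm.toLinearEquiv.trans E.toLinearEquiv
  obtain rfl : k = n + 1 := by simpa using F.finrank_eq
  refine ⟨(Pi.basisFun ℝ (Fin (n + 1))).map F, ?_⟩
  rw [← F.image_setOf_pos_eq, ← image_preimage_eq C E.surjective, ← hP, hΦ,
    ← Φ.image_symm_eq_preimage, image_image]
  rfl

/-- If a connected abelian subgroup of `GL(n+1,ℝ)` preserves a properly convex open
cone and acts simply transitively on its rays, then the cone is simplicial:
it is the set of strictly positive linear combinations of some basis of `ℝ^{n+1}`. -/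
theorem simplicial_of_simply_transitive_abelian (n : ℕ)
    (C : Set (Fin (n + 1) → ℝ)) (hC : IsProperlyConvexOpenCone (n + 1) C)
    (T : Subgroup (Matrix.GeneralLinearGroup (Fin (n + 1)) ℝ))
    (habel : ∀ g ∈ T, ∀ h ∈ T, g * h = h * g)
    (hconn : IsConnected (T : Set (Matrix.GeneralLinearGroup (Fin (n + 1)) ℝ)))
    (hpres : ∀ g ∈ T, Matrix.mulVec ((g : Matrix.GeneralLinearGroup (Fin (n + 1)) ℝ) :
      Matrix (Fin (n + 1)) (Fin (n + 1)) ℝ) '' C = C)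
    (htrans : ∀ x ∈ C, ∀ y ∈ C, ∃ g ∈ T, ∃ c : ℝ, 0 < c ∧
      Matrix.mulVec ((g : Matrix.GeneralLinearGroup (Fin (n + 1)) ℝ) :
        Matrix (Fin (n + 1)) (Fin (n + 1)) ℝ) x = c • y)
    (hfree : ∀ g ∈ T, (∃ x ∈ C, ∃ c : ℝ, 0 < c ∧
      Matrix.mulVec ((g : Matrix.GeneralLinearGroup (Fin (n + 1)) ℝ) :
        Matrix (Fin (n + 1)) (Fin (n + 1)) ℝ) x = c • x) →
      ∃ lam : ℝ, ((g : Matrix.GeneralLinearGroup (Fin (n + 1)) ℝ) :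
        Matrix (Fin (n + 1)) (Fin (n + 1)) ℝ) = lam • (1 : Matrix (Fin (n + 1)) (Fin (n + 1)) ℝ)) :
    ∃ v : Module.Basis (Fin (n + 1)) ℝ (Fin (n + 1) → ℝ),
      C = {x | ∃ t : Fin (n + 1) → ℝ, (∀ i, 0 < t i) ∧ x = ∑ i, t i • v i} :=
  simplicial_of_simply_transitive_abelian_general n C hC T habel hpres htrans
end

section
/- Let G be a torsion-free group and let H ≤ G be a subgroup of finite index whose center Z(H) is nontrivial. Then G contains a nontrivial normal abelian subgroup. -/
/-- A monoid is torsion-free if no nontrivial element has finite order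
(the definition of `Monoid.IsTorsionFree` in the older Mathlib). -/
def Monoid.IsTorsionFree (G : Type*) [Monoid G] : Prop :=
  ∀ g : G, g ≠ 1 → ¬IsOfFinOrder g

/-!
Let `K` be the normal core of `H`: it is normal and still of finite index. A nontrivial
central element `z` of `H` centralizes `K`, and some power `z ^ n` with `n > 0` lies in `K`;
by torsion-freeness `z ^ n ≠ 1`. Hence `z ^ n` is a nontrivial element of
`centralizer K ⊓ K`, the center of `K`, which is abelian and, as an intersection of two
normal subgroups, normal in `G`.
-/

namespace Subgroup

variable {G : Type*} [Group G]

theorem coe_mem_centralizer_of_mem_center {H K : Subgroup G} (hKH : K ≤ H) {z : H}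
    (hz : z ∈ center H) : (z : G) ∈ centralizer (K : Set G) := fun k hk =>
  congrArg Subtype.val (mem_center_iff.mp hz ⟨k, hKH hk⟩)

theorem exists_pow_ne_one_mem_of_finiteIndex (htf : Monoid.IsTorsionFree G) {K : Subgroup G}
    [K.FiniteIndex] {g : G} (hg : g ≠ 1) : ∃ n : ℕ, g ^ n ≠ 1 ∧ g ^ n ∈ K := by
  obtain ⟨n, hn, -, hgn⟩ := exists_pow_mem_of_index_ne_zero ‹K.FiniteIndex›.index_ne_zero g
  exact ⟨n, fun h => htf g hg (isOfFinOrder_iff_pow_eq_one.mpr ⟨n, hn, h⟩), hgn⟩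

theorem mul_comm_of_mem_centralizer_inf_self {K : Subgroup G} {a b : G}
    (ha : a ∈ centralizer (K : Set G) ⊓ K) (hb : b ∈ centralizer (K : Set G) ⊓ K) :
    a * b = b * a :=
  (mem_centralizer_iff.mp ha.1 b hb.2).symm

end Subgroup

open Subgroup in
/-- If `G` is torsion-free and `H ≤ G` has finite index and nontrivial center, then
`G` contains a nontrivial normal abelian subgroup. -/
theorem nontrivial_normal_abelian_of_finiteIndex_center
    (G : Type*) [Group G] (htf : Monoid.IsTorsionFree G)
    (H : Subgroup G) (hfin : H.FiniteIndex) (hcent : Subgroup.center H ≠ ⊥) :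
    ∃ A : Subgroup G, A.Normal ∧ A ≠ ⊥ ∧ ∀ a ∈ A, ∀ b ∈ A, a * b = b * a := by
  obtain ⟨⟨z, hz⟩, hz1⟩ := ne_bot_iff_exists_ne_one.mp hcent
  set K := H.normalCore
  have hzK : (z : G) ∈ centralizer (K : Set G) :=
    coe_mem_centralizer_of_mem_center H.normalCore_le hz
  have hz1 : (z : G) ≠ 1 := fun h => hz1 (Subtype.ext (Subtype.ext h))
  obtain ⟨n, hzn1, hznK⟩ := exists_pow_ne_one_mem_of_finiteIndex htf (K := K) hz1
  refine ⟨centralizer (K : Set G) ⊓ K, inferInstance, fun hA => hzn1 ?_, fun a ha b hb =>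
    mul_comm_of_mem_centralizer_inf_self ha hb⟩
  exact mem_bot.mp (hA ▸ ⟨pow_mem hzK n, hznK⟩)
end

section
/- Let Λ ⊆ ℝ^m be the subgroup generated over ℤ by a basis of ℝ^m (a full-rank lattice). Then for every v ∈ ℝ^m, every ε > 0 and every s ∈ ℝ, there exist λ ∈ Λ and t > s with ‖λ − t·v‖ < ε. (In particular, a lattice in an abelian group T ≅ ℝ^m approaches every one-parameter subgroup of T at infinity.) -/
/-!
Reduce the multiples `n c • v` (for a fixed step `c > max s 0`) modulo the lattice into its
bounded fundamental domain. By compactness two of the reductions, say those of `j c • v` and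
`k c • v` with `j < k`, are `ε`-close; the difference of the lattice points subtracted from them
is then within `ε` of `(k - j) c • v`, and `(k - j) c ≥ c > s`.
-/

open Bornology Submodule

theorem Metric.exists_lt_dist_lt_of_isBounded {X : Type*} [PseudoMetricSpace X] [ProperSpace X]
    {S : Set X} (hS : IsBounded S) {x : ℕ → X} (hx : ∀ n, x n ∈ S) {ε : ℝ} (hε : 0 < ε) :
    ∃ j k, j < k ∧ dist (x j) (x k) < ε := by
  obtain ⟨y, -, φ, hφ, hlim⟩ := tendsto_subseq_of_bounded hS hx
  obtain ⟨N, hN⟩ := Metric.cauchySeq_iff'.mp hlim.cauchySeq ε hε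
  exact ⟨φ N, φ (N + 1), hφ N.lt_succ_self, by rw [dist_comm]; exact hN _ N.le_succ⟩

namespace ZSpan

theorem exists_lt_norm_sub_sub_lt {E ι : Type*} [NormedAddCommGroup E] [NormedSpace ℝ E]
    [Finite ι] (b : Module.Basis ι ℝ E) (x : ℕ → E) {ε : ℝ} (hε : 0 < ε) :
    ∃ j k, j < k ∧ ∃ lam ∈ span ℤ (Set.range b), ‖lam - (x k - x j)‖ < ε := by
  cases nonempty_fintype ι
  have : FiniteDimensional ℝ E := b.finiteDimensional_of_finite
  obtain ⟨j, k, hjk, hdist⟩ := Metric.exists_lt_dist_lt_of_isBounded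
    (fundamentalDomain_isBounded b) (fun n ↦ fract_mem_fundamentalDomain b (x n)) hε
  refine ⟨j, k, hjk, floor b (x k) - floor b (x j), sub_mem (floor b _).2 (floor b _).2, ?_⟩
  have hdiff : (floor b (x k) - floor b (x j) : E) - (x k - x j) =
      fract b (x j) - fract b (x k) := by
    simp only [fract_apply]
    abel
  rwa [hdiff, ← dist_eq_norm]

end ZSpan

/-- A full-rank lattice `Λ = ℤ⟨v₁,…,v_m⟩` in Euclidean space approaches every
one-parameter subgroup `t ↦ t • v` at infinity: lattice points come within `ε` of
`t • v` for arbitrarily large `t`. -/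
theorem lattice_approaches_one_parameter_subgroup (m : ℕ)
    (b : Module.Basis (Fin m) ℝ (EuclideanSpace ℝ (Fin m))) :
    ∀ v : EuclideanSpace ℝ (Fin m), ∀ ε : ℝ, 0 < ε → ∀ s : ℝ,
      ∃ lam ∈ AddSubgroup.closure (Set.range b), ∃ t : ℝ, t > s ∧ ‖lam - t • v‖ < ε := by
  intro v ε hε s
  set c : ℝ := max s 0 + 1
  have hc : s < c ∧ 0 < c := ⟨by grind, by positivity⟩
  obtain ⟨j, k, hjk, lam, hlam, hnear⟩ :=
    ZSpan.exists_lt_norm_sub_sub_lt b (fun n : ℕ ↦ (n * c) • v) hε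
  have hkj : (1 : ℝ) ≤ k - j := by
    rw [le_sub_iff_add_le']
    exact_mod_cast hjk
  refine ⟨lam, Submodule.span_int_eq_addSubgroupClosure (Set.range b) ▸ hlam, (k - j) * c,
    by nlinarith, ?_⟩
  rwa [sub_mul, sub_smul]
end
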